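/- If X=x causes Y=y in (M,u⃗) according to Modified HP with X⃗ a singleton, then X=x causes Y=y according to each of Def 2, Def 4, and Def 8. -/

import Mathlib

open Classical

/-- A strongly recursive structural-equations (causal) model with exogenous
variables `U`, endogenous variables `V`, and values in `α`.  `rng v` is the
range `R(v)` of an endogenous variable; `F v u s` is the structural equation of
`v` evaluated in context `u` at the assignment `s` (it does not depend on
`s v`); `solve Z g u` is the unique solution of the model obtained by
intervening `Z ← g` in context `u`; `actual u` is the actual world of context
`u`; `prec` is a well-founded order witnessing strong recursivity. -/
structure CausalModel (U V α : Type) where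
  rng : V → Set α
  F : V → U → (V → α) → α
  F_rng : ∀ (v : V) (u : U) (s : V → α), F v u s ∈ rng v
  F_self : ∀ (v : V) (u : U) (s s' : V → α), (∀ w, w ≠ v → s w = s' w) → F v u s = F v u s'
  solve : Set V → (V → α) → U → V → α
  solve_mem : ∀ (Z : Set V) (g : V → α) (u : U), ∀ v ∈ Z, solve Z g u v = g v
  solve_not_mem : ∀ (Z : Set V) (g : V → α) (u : U) (v : V), v ∉ Z →
    solve Z g u v = F v u (solve Z g u)
  solve_unique : ∀ (Z : Set V) (g : V → α) (u : U) (s : V → α),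
    (∀ v ∈ Z, s v = g v) → (∀ v ∉ Z, s v = F v u s) → s = solve Z g u
  actual : U → V → α
  actual_def : ∀ (g : V → α) (u : U), solve ∅ g u = actual u
  prec : V → V → Prop
  prec_wf : WellFounded prec
  prec_dep : ∀ a b : V, (∃ (u : U) (s s' : V → α), (∀ w, s w ∈ rng w) ∧ (∀ w, s' w ∈ rng w) ∧
    (∀ w, w ≠ a → s w = s' w) ∧ F b u s ≠ F b u s') → prec a b

namespace CausalModel

variable {U V α : Type}

/-- The assignment that is `x` on `X` and `g` elsewhere. -/
noncomputable def merge (X : Set V) (x g : V → α) : V → α :=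
  fun v => if v ∈ X then x v else g v

/-- `g` is a valid setting: every variable gets a value in its range. -/
def Setting (M : CausalModel U V α) (g : V → α) : Prop := ∀ v, g v ∈ M.rng v

/-- `X⃗=x⃗` is directly sufficient for `Y⃗=y⃗`: in every context, intervening
`X⃗ ← x⃗` together with arbitrary (in-range) values for all remaining variables
`C⃗ = V ∖ (X⃗ ∪ Y⃗)` yields `Y⃗ = y⃗`. -/
def directlySuff (M : CausalModel U V α) (X : Set V) (x : V → α) (Y : Set V) (y : V → α) : Prop :=
  ∀ g : V → α, M.Setting g → (∀ v ∈ X, g v = x v) →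
    ∀ u : U, ∀ v ∈ Y, M.solve (X ∪ (X ∪ Y)ᶜ) g u v = y v

/-- Actual direct sufficiency: as `directlySuff` but only in the given context `u`. -/
def actDirectlySuff (M : CausalModel U V α) (u : U) (X : Set V) (x : V → α)
    (Y : Set V) (y : V → α) : Prop :=
  ∀ g : V → α, M.Setting g → (∀ v ∈ X, g v = x v) →
    ∀ v ∈ Y, M.solve (X ∪ (X ∪ Y)ᶜ) g u v = y v

/-- `X⃗=x⃗` is weakly sufficient for `Y⃗=y⃗`: in every context, `[X⃗ ← x⃗] Y⃗=y⃗`. -/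
def weaklySuff (M : CausalModel U V α) (X : Set V) (x : V → α) (Y : Set V) (y : V → α) : Prop :=
  ∀ u : U, ∀ v ∈ Y, M.solve X x u v = y v

/-- Actual weak sufficiency in context `u`: `(M,u) ⊨ [X⃗ ← x⃗] Y⃗=y⃗`. -/
def actWeaklySuff (M : CausalModel U V α) (u : U) (X : Set V) (x : V → α)
    (Y : Set V) (y : V → α) : Prop :=
  ∀ v ∈ Y, M.solve X x u v = y v

/-- `X⃗=x⃗` is strongly sufficient for `Y⃗=y⃗`: it is directly sufficient for some
superset `N⃗ ⊇ Y⃗` with values extending `y⃗`. -/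
def stronglySuff (M : CausalModel U V α) (X : Set V) (x : V → α) (Y : Set V) (y : V → α) : Prop :=
  ∃ (N : Set V) (n : V → α), Y ⊆ N ∧ (∀ v ∈ Y, n v = y v) ∧ M.directlySuff X x N n

/-- Actual strong sufficiency of `X⃗=x⃗` for the single effect `Y0 = y` along the
network `N` in context `u`. -/
def actStronglySuffNet (M : CausalModel U V α) (u : U) (X : Set V) (x : V → α)
    (Y0 : V) (y : α) (N : Set V) : Prop :=
  ∃ n : V → α, Y0 ∈ N ∧ n Y0 = y ∧ M.actDirectlySuff u X x N n

/-- `a` is a parent of `b`: the equation of `b` depends on the value of `a`. -/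
def IsParent (M : CausalModel U V α) (a b : V) : Prop :=
  ∃ (u : U) (s s' : V → α), M.Setting s ∧ M.Setting s' ∧
    (∀ w, w ≠ a → s w = s' w) ∧ M.F b u s ≠ M.F b u s'

/-- `a` is only a parent of `b`: the single edge `a → b` is the only directed
path from `a` to `b`. -/
def OnlyParent (M : CausalModel U V α) (a b : V) : Prop :=
  M.IsParent a b ∧ ¬ ∃ z, M.IsParent a z ∧ Relation.TransGen M.IsParent z b

/-- `R` is the set of root variables: equations of members of `R` depend only on
the context, and equations of all other variables do not depend on the context
(exogenous variables appear only in equations of the form `V = U`). -/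
def IsRootSet (M : CausalModel U V α) (R : Set V) : Prop :=
  (∀ v ∈ R, ∀ (u : U) (s s' : V → α), M.F v u s = M.F v u s') ∧
  (∀ v ∉ R, ∀ (u u' : U) (s : V → α), M.F v u s = M.F v u' s)

/-- Def 2: contrastive necessity with actual strong sufficiency (AC1, AC2, AC3). -/
def CauseDef2 (M : CausalModel U V α) (u : U) (X : Set V) (x : V → α) (Y0 : V) (y : α) : Prop :=
  (∀ v ∈ X, M.actual u v = x v) ∧ M.actual u Y0 = y ∧
  (∃ (W N : Set V) (x' : V → α), Disjoint W (X ∪ {Y0}) ∧ (∀ v ∈ X, x' v ∈ M.rng v) ∧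
      M.actStronglySuffNet u (X ∪ W) (merge X x (M.actual u)) Y0 y N ∧
      ∀ S ⊆ N, ¬ M.actStronglySuffNet u (X ∪ W) (merge X x' (M.actual u)) Y0 y S) ∧
  (∀ X' ⊂ X, ¬ ∃ (W N : Set V) (x' : V → α), Disjoint W (X' ∪ {Y0}) ∧
      (∀ v ∈ X', x' v ∈ M.rng v) ∧
      M.actStronglySuffNet u (X' ∪ W) (merge X' x (M.actual u)) Y0 y N ∧
      ∀ S ⊆ N, ¬ M.actStronglySuffNet u (X' ∪ W) (merge X' x' (M.actual u)) Y0 y S)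

/-- Def 3: contrastive necessity with actual direct sufficiency (AC1, AC2, AC3). -/
def CauseDef3 (M : CausalModel U V α) (u : U) (X : Set V) (x : V → α) (Y0 : V) (y : α) : Prop :=
  (∀ v ∈ X, M.actual u v = x v) ∧ M.actual u Y0 = y ∧
  (∃ (W : Set V) (x' : V → α), Disjoint W (X ∪ {Y0}) ∧ (∀ v ∈ X, x' v ∈ M.rng v) ∧
      M.actDirectlySuff u (X ∪ W) (merge X x (M.actual u)) {Y0} (fun _ => y) ∧
      ¬ M.actDirectlySuff u (X ∪ W) (merge X x' (M.actual u)) {Y0} (fun _ => y)) ∧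
  (∀ X' ⊂ X, ¬ ∃ (W : Set V) (x' : V → α), Disjoint W (X' ∪ {Y0}) ∧
      (∀ v ∈ X', x' v ∈ M.rng v) ∧
      M.actDirectlySuff u (X' ∪ W) (merge X' x (M.actual u)) {Y0} (fun _ => y) ∧
      ¬ M.actDirectlySuff u (X' ∪ W) (merge X' x' (M.actual u)) {Y0} (fun _ => y))

/-- Def 4 (singleton cause): contrastive necessity with non-actual weak sufficiency. -/
def CauseDef4 (M : CausalModel U V α) (u : U) (X0 : V) (x0 : α) (Y0 : V) (y : α) : Prop :=
  M.actual u X0 = x0 ∧ M.actual u Y0 = y ∧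
  ∃ (W : Set V) (x' : α), Disjoint W ({X0} ∪ {Y0} : Set V) ∧ x' ∈ M.rng X0 ∧
    M.weaklySuff ({X0} ∪ W) (merge {X0} (fun _ => x0) (M.actual u)) {Y0} (fun _ => y) ∧
    ¬ M.weaklySuff ({X0} ∪ W) (merge {X0} (fun _ => x') (M.actual u)) {Y0} (fun _ => y)

/-- Def 8 (singleton cause): minimal necessity with actual strong sufficiency
(minimality AC3 is automatic for singletons). -/
def CauseDef8 (M : CausalModel U V α) (u : U) (X0 : V) (x0 : α) (Y0 : V) (y : α) : Prop :=
  M.actual u X0 = x0 ∧ M.actual u Y0 = y ∧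
  ∃ W N : Set V, Disjoint W ({X0} ∪ {Y0} : Set V) ∧
    M.actStronglySuffNet u ({X0} ∪ W) (merge {X0} (fun _ => x0) (M.actual u)) Y0 y N ∧
    ∀ S ⊆ N, ¬ M.actStronglySuffNet u W (M.actual u) Y0 y S

/-- Def 10 (singleton cause): minimal necessity with non-actual weak sufficiency. -/
def CauseDef10 (M : CausalModel U V α) (u : U) (X0 : V) (x0 : α) (Y0 : V) (y : α) : Prop :=
  M.actual u X0 = x0 ∧ M.actual u Y0 = y ∧
  ∃ W : Set V, Disjoint W ({X0} ∪ {Y0} : Set V) ∧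
    M.weaklySuff ({X0} ∪ W) (merge {X0} (fun _ => x0) (M.actual u)) {Y0} (fun _ => y) ∧
    ¬ M.weaklySuff W (M.actual u) {Y0} (fun _ => y)

end CausalModel

/-!
Once every root variable is intervened on, all other variables are determined without reference
to the context, because exogenous variables occur only in the equations of roots. The roots
outside `X` already take their actual values under the Modified-HP intervention `X ← x'`, so
adding them to the witness `W` keeps `Y ≠ y` there. With the enlarged witness, `X = x` together
with the actual values fixes the actual world in every context (Def 4, and actual strong
sufficiency along the complement for Defs 2 and 8), while the world produced by `X ← x'` is an
admissible setting that refutes strong sufficiency along any smaller network.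
-/

namespace CausalModel

variable {U V α : Type} (M : CausalModel U V α) {u u' : U} {X Z Z' S Y R : Set V}
  {x g : V → α}

theorem actual_eq_F (v : V) : M.actual u v = M.F v u (M.actual u) := by
  rw [← M.actual_def (M.actual u), M.solve_not_mem ∅ _ u v (Set.notMem_empty v)]

theorem setting_actual : M.Setting (M.actual u) := fun v => by
  rw [actual_eq_F]
  exact M.F_rng v u _

@[simp]
theorem merge_empty (x g : V → α) : merge ∅ x g = g := by
  funext v
  simp [merge]

theorem merge_eq_self (h : ∀ v ∈ X, x v = g v) : merge X x g = g := by
  funext v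
  by_cases hv : v ∈ X <;> simp [merge, hv, h]

theorem setting_merge (hg : M.Setting g) (hx : ∀ v ∈ X, x v ∈ M.rng v) :
    M.Setting (merge X x g) := fun v => by
  by_cases hv : v ∈ X <;> simp [merge, hv, hx, hg v]

theorem setting_solve (hg : M.Setting g) : M.Setting (M.solve Z g u) := fun v => by
  by_cases hv : v ∈ Z
  · rw [M.solve_mem Z g u v hv]
    exact hg v
  · rw [M.solve_not_mem Z g u v hv]
    exact M.F_rng v u _

theorem solve_eq_actual (hg : ∀ v ∈ Z, g v = M.actual u v) : M.solve Z g u = M.actual u :=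
  (M.solve_unique Z g u _ (fun v hv => (hg v hv).symm) fun v _ => M.actual_eq_F v).symm

theorem solve_eq_of_subset (hZ : Z ⊆ Z') (h : ∀ v ∈ Z', M.solve Z g u v = g v) :
    M.solve Z' g u = M.solve Z g u :=
  (M.solve_unique Z' g u _ h fun v hv => M.solve_not_mem Z g u v fun h => hv (hZ h)).symm

theorem solve_solve_of_subset (hZ : Z ⊆ Z') :
    M.solve Z' (M.solve Z g u) u = M.solve Z g u :=
  (M.solve_unique Z' _ u _ (fun _ _ => rfl) fun v hv =>
    M.solve_not_mem Z g u v fun h => hv (hZ h)).symm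

theorem solve_eq_actual_of_mem_rootSet (hR : M.IsRootSet R) {v : V} (hvR : v ∈ R)
    (hvZ : v ∉ Z) : M.solve Z g u v = M.actual u v := by
  rw [M.solve_not_mem Z g u v hvZ, hR.1 v hvR u _ (M.actual u), ← actual_eq_F]

theorem solve_union_rootSet (hR : M.IsRootSet R)
    (hg : ∀ v ∈ R, v ∉ Z → g v = M.actual u v) : M.solve (Z ∪ R) g u = M.solve Z g u := by
  refine M.solve_eq_of_subset Set.subset_union_left fun v hv => ?_
  by_cases hvZ : v ∈ Z
  · exact M.solve_mem Z g u v hvZ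
  · have hvR : v ∈ R := hv.resolve_left hvZ
    rw [M.solve_eq_actual_of_mem_rootSet hR hvR hvZ, hg v hvR hvZ]

theorem solve_eq_of_rootSet_subset (hR : M.IsRootSet R) (hRZ : R ⊆ Z) :
    M.solve Z g u = M.solve Z g u' :=
  M.solve_unique Z g u' _ (M.solve_mem Z g u) fun v hv => by
    rw [M.solve_not_mem Z g u v hv]
    exact hR.2 v (fun h => hv (hRZ h)) u u' _

theorem weaklySuff_actual (hR : M.IsRootSet R) (hRZ : R ⊆ Z) {y : V → α}
    (hy : ∀ v ∈ Y, M.actual u v = y v) : M.weaklySuff Z (M.actual u) Y y := fun u' v hv => by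
  rw [← M.solve_eq_of_rootSet_subset hR hRZ, M.solve_eq_actual fun _ _ => rfl, hy v hv]

theorem actStronglySuffNet_actual {Y0 : V} (hY0 : Y0 ∉ X) (hx : ∀ v ∈ X, x v = M.actual u v) :
    M.actStronglySuffNet u X x Y0 (M.actual u Y0) Xᶜ := by
  refine ⟨M.actual u, hY0, rfl, fun g _ hg v _ => ?_⟩
  rw [Set.union_compl_self, Set.compl_univ, Set.union_empty,
    M.solve_eq_actual fun w hw => (hg w hw).trans (hx w hw)]

/-- The solution itself is an admissible setting, and intervening with it on `Sᶜ ⊇ Z`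
reproduces it. -/
theorem not_actStronglySuffNet_of_solve (hg : M.Setting g) (hXZ : X ⊆ Z)
    (hx : ∀ v ∈ X, M.solve Z g u v = x v) (hS : S ⊆ Zᶜ) {Y0 : V} {y : α}
    (hy : M.solve Z g u Y0 ≠ y) : ¬ M.actStronglySuffNet u X x Y0 y S := by
  rintro ⟨n, hY0S, hnY0, hsuff⟩
  have hZS : Z ⊆ Sᶜ := Set.subset_compl_comm.mp hS
  have hset : X ∪ (X ∪ S)ᶜ = Sᶜ := by
    rw [Set.compl_union, Set.union_inter_distrib_left, Set.union_compl_self, Set.univ_inter]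
    exact Set.union_eq_right.mpr (hXZ.trans hZS)
  have h := hsuff _ (M.setting_solve hg) hx Y0 hY0S
  rw [hset, M.solve_solve_of_subset hZS] at h
  exact hy (h.trans hnY0)

theorem exists_witness_rootSet_subset (hR : M.IsRootSet R) {W : Set V} {Y0 : V} {y : α}
    (hY0X : Y0 ∉ X) (hy : M.actual u Y0 = y) (hg : ∀ v ∉ X, g v = M.actual u v)
    (hfail : M.solve (X ∪ W) g u Y0 ≠ y) :
    ∃ W' : Set V, Disjoint W' (X ∪ {Y0}) ∧ R ⊆ X ∪ W' ∧ M.solve (X ∪ W') g u Y0 ≠ y := by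
  have hY0W : Y0 ∉ W := fun h =>
    hfail (by rw [M.solve_mem _ g u Y0 (Or.inr h), hg Y0 hY0X, hy])
  have hY0R : Y0 ∉ R := fun h =>
    hfail (by rw [M.solve_eq_actual_of_mem_rootSet hR h (by simp [hY0X, hY0W]), hy])
  refine ⟨(W ∪ R) \ X, ?_, ?_, ?_⟩
  · rw [Set.disjoint_union_right, Set.disjoint_singleton_right]
    exact ⟨Set.disjoint_sdiff_left, by simp [hY0W, hY0R]⟩
  · rw [Set.union_sdiff_self]
    exact Set.subset_union_of_subset_right Set.subset_union_right _
  · rwa [Set.union_sdiff_self, ← Set.union_assoc,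
      M.solve_union_rootSet (Z := X ∪ W) hR fun v _ hv => hg v fun h => hv (Or.inl h)]

/-- Modified HP with a singleton cause implies Def 2, Def 4, and
Def 8 (in models satisfying the root-variable restriction). -/
theorem modifiedHP_implies_defs {U V α : Type} (M : CausalModel U V α)
    (R : Set V) (hR : M.IsRootSet R) (u : U)
    (X0 Y0 : V) (x0 y : α) (hne : X0 ≠ Y0)
    (hAC1x : M.actual u X0 = x0) (hAC1y : M.actual u Y0 = y)
    (hMHP : ∃ (W : Set V) (x' : α), W ⊆ ({X0} : Set V)ᶜ ∧ x' ∈ M.rng X0 ∧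
        ¬ M.actWeaklySuff u ({X0} ∪ W) (merge {X0} (fun _ => x') (M.actual u))
            {Y0} (fun _ => y)) :
    CauseDef2 M u {X0} (fun _ => x0) Y0 y ∧ CauseDef4 M u X0 x0 Y0 y ∧
      CauseDef8 M u X0 x0 Y0 y := by
  obtain ⟨W, x', -, hx', hfail⟩ := hMHP
  set g := merge {X0} (fun _ => x') (M.actual u)
  have hg : M.Setting g := M.setting_merge M.setting_actual fun v hv => hv ▸ hx'
  obtain ⟨W', hdisj, hRW', hfail'⟩ := M.exists_witness_rootSet_subset hR
    (X := {X0}) (Ne.symm hne) hAC1y (fun v hv => if_neg hv)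
    fun h => hfail fun v hv => hv ▸ h
  have hY0 : Y0 ∉ {X0} ∪ W' := fun h =>
    h.elim (fun h => hne h.symm) (Set.disjoint_left.mp hdisj · (Or.inr rfl))
  have hx0 : merge {X0} (fun _ => x0) (M.actual u) = M.actual u :=
    merge_eq_self fun v hv => hv ▸ hAC1x.symm
  have hpos : M.actStronglySuffNet u ({X0} ∪ W') (merge {X0} (fun _ => x0) (M.actual u)) Y0 y
      ({X0} ∪ W')ᶜ := by
    rw [← hAC1y]
    exact M.actStronglySuffNet_actual hY0 fun v _ => congrFun hx0 v
  have hW'g : ∀ v ∈ W', M.solve ({X0} ∪ W') g u v = M.actual u v := fun v hv => by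
    rw [M.solve_mem _ g u v (Or.inr hv)]
    exact if_neg (Set.disjoint_left.mp hdisj hv <| Or.inl ·)
  refine ⟨⟨by simpa, hAC1y, ⟨W', _, fun _ => x', hdisj, by simpa, hpos,
      fun S hS => M.not_actStronglySuffNet_of_solve hg subset_rfl (M.solve_mem _ g u) hS
        hfail'⟩, ?_⟩,
    ⟨hAC1x, hAC1y, W', x', hdisj, hx', ?_, fun h => hfail' (h u Y0 rfl)⟩,
    ⟨hAC1x, hAC1y, W', _, hdisj, hpos, fun S hS =>
      M.not_actStronglySuffNet_of_solve hg Set.subset_union_right hW'g hS hfail'⟩⟩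
  · rintro X' hX' ⟨W'', N, x'', -, -, hsuff, hnot⟩
    obtain rfl := Set.ssubset_singleton_iff.mp hX'
    simp only [merge_empty] at hsuff hnot
    exact hnot N subset_rfl hsuff
  · rw [hx0]
    exact M.weaklySuff_actual hR hRW' fun v hv => hv ▸ hAC1y

end CausalModel
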